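/- For the extended random ensemble R_{m,n}^{(2)} (each matrix obtained from a uniformly random m×n binary matrix H with rows h₁,…,h_m, m even, by inserting h_{2i−1}⊕h_{2i} after each consecutive pair), the average SS weight distribution equals S_w = C(n,w)/2^{mn} · ((2^n − w·2^{n−w})² − V)^{m/2}, where V = 2^{2(n−w)+1}·Σ_{γ=2}^{w} C(w,γ)(w−γ), for all 1 ≤ w ≤ n. -/

import Mathlib

/-!
Fix `x` of weight `w`. The rows of `H` come in independent consecutive pairs `(h, h')`, and `x`
is an SS vector of `H^(2)` iff for every pair none of `h`, `h'`, `h ⊕ h'` meets the support of `x`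
in exactly one position. Only the restrictions to the support of `x` matter, so a pair is good
for `4^(n-w) Q_w` choices, where `Q_w` counts the pairs `(a, b)` of length-`w` vectors with `a`,
`b`, `a ⊕ b` all of weight `≠ 1`. Now `a ⊕ b` has weight one iff `b = a ⊕ e` for a unit
vector `e`, and `a`, `a ⊕ e` never both have weight one (their weights differ in parity), so
`Q_w = (2^w - w)^2 - w (2^w - 2w)`. Summing over the `C(n,w)` vectors `x` and using
`∑_γ C(w,γ)(w - γ) = w 2^(w-1)` gives the formula.
-/

/-- Integer inner product of two binary (Bool) vectors. -/
def ip {n : ℕ} (h x : Fin n → Bool) : ℕ :=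
  ∑ i, if h i ∧ x i then 1 else 0

/-- Hamming weight of a binary vector. -/
def wt {n : ℕ} (x : Fin n → Bool) : ℕ :=
  (Finset.univ.filter fun i => x i = true).card

/-- `x` is an SS vector of the extension `H^(2)` of a matrix `H` with `2k` rows:
every row, and every XOR of a consecutive pair of rows, has inner product ≠ 1 with `x`. -/
def isSSext2 {k n : ℕ} (H : Fin (2 * k) → Fin n → Bool) (x : Fin n → Bool) : Prop :=
  (∀ j : Fin (2 * k), ip (H j) x ≠ 1) ∧
  ∀ i : Fin k,
    ip (fun j => xor (H ⟨2 * i.val, by omega⟩ j) (H ⟨2 * i.val + 1, by omega⟩ j)) x ≠ 1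

instance {k n : ℕ} (H : Fin (2 * k) → Fin n → Bool) (x : Fin n → Bool) :
    Decidable (isSSext2 H x) := by unfold isSSext2; infer_instance

/-- SS weight distribution at weight `w` of the extension `H^(2)`. -/
def SSdistExt2 (k n w : ℕ) (H : Fin (2 * k) → Fin n → Bool) : ℕ :=
  (Finset.univ.filter fun x : Fin n → Bool => wt x = w ∧ isSSext2 H x).card

open Finset

section BoolVectors

variable {ι : Type*} [Fintype ι]

def boolWeight (a : ι → Bool) : ℕ := #{i | a i = true}

lemma boolWeight_eq_sum_toNat (a : ι → Bool) : boolWeight a = ∑ i, (a i).toNat := by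
  rw [boolWeight, card_filter]
  exact sum_congr rfl fun i _ => by cases a i <;> rfl

lemma boolWeight_xor_add_two_mul (a b : ι → Bool) :
    boolWeight (fun i => xor (a i) (b i)) + 2 * boolWeight (fun i => a i && b i)
      = boolWeight a + boolWeight b := by
  simp only [boolWeight_eq_sum_toNat, mul_sum, ← sum_add_distrib]
  exact sum_congr rfl fun i _ => by cases a i <;> cases b i <;> rfl

lemma boolWeight_xor_ne_one {a e : ι → Bool} (ha : boolWeight a = 1) (he : boolWeight e = 1) :
    boolWeight (fun i => xor (a i) (e i)) ≠ 1 := by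
  have := boolWeight_xor_add_two_mul a e
  omega

variable [DecidableEq ι]

lemma card_boolWeight_eq (k : ℕ) :
    #{a : ι → Bool | boolWeight a = k} = (Fintype.card ι).choose k := by
  rw [← card_univ, ← card_powersetCard, powersetCard_eq_filter]
  refine card_nbij' (fun a => ({i | a i = true} : Finset ι)) (fun s i => decide (i ∈ s))
    ?_ ?_ ?_ ?_
  · intro a ha
    simp only [coe_filter, Set.mem_ofPred_eq] at ha ⊢
    simpa [boolWeight] using ha
  · intro s hs
    simp only [coe_filter, Set.mem_ofPred_eq] at hs ⊢
    simpa [boolWeight] using hs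
  · intro a _; funext i; simp
  · intro s _; ext i; simp

lemma card_boolWeight_xor_eq_one (e : ι → Bool) :
    #{a : ι → Bool | boolWeight (fun i => xor (a i) (e i)) = 1} = Fintype.card ι := by
  rw [← Nat.choose_one_right (Fintype.card ι), ← card_boolWeight_eq]
  exact card_equiv (Function.Involutive.toPerm (fun a i => xor (a i) (e i))
    fun a => by funext i; simp) fun _ => by simp only [mem_filter, mem_univ, true_and]; rfl

lemma card_boolWeight_ne_one :
    #{a : ι → Bool | boolWeight a ≠ 1} + Fintype.card ι = 2 ^ Fintype.card ι := by
  have h := card_filter_add_card_filter_not (s := univ) (fun a : ι → Bool => boolWeight a = 1)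
  rw [card_boolWeight_eq, Nat.choose_one_right, card_univ, Fintype.card_fun, Fintype.card_bool]
    at h
  simp only [ne_eq]
  omega

lemma card_boolWeight_ne_one_and_xor_ne_one {e : ι → Bool} (he : boolWeight e = 1) :
    #{a : ι → Bool | boolWeight a ≠ 1 ∧ boolWeight (fun i => xor (a i) (e i)) ≠ 1}
      + 2 * Fintype.card ι = 2 ^ Fintype.card ι := by
  have hdisj : Disjoint ({a | boolWeight a = 1} : Finset (ι → Bool))
      ({a | boolWeight (fun i => xor (a i) (e i)) = 1} : Finset (ι → Bool)) :=
    disjoint_filter.2 fun a _ ha => boolWeight_xor_ne_one ha he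
  have h := card_filter_add_card_filter_not (s := univ)
    (fun a : ι → Bool => boolWeight a = 1 ∨ boolWeight (fun i => xor (a i) (e i)) = 1)
  rw [filter_or, card_union_of_disjoint hdisj, card_boolWeight_eq, Nat.choose_one_right,
    card_boolWeight_xor_eq_one, card_univ, Fintype.card_fun, Fintype.card_bool] at h
  simp only [not_or, ne_eq] at h ⊢
  omega

lemma card_pairs_xor_eq_one :
    #{p : (ι → Bool) × (ι → Bool) |
        boolWeight p.1 ≠ 1 ∧ boolWeight p.2 ≠ 1 ∧
          boolWeight (fun i => xor (p.1 i) (p.2 i)) = 1}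
      = ∑ e with boolWeight e = 1,
          #{a : ι → Bool |
            boolWeight a ≠ 1 ∧ boolWeight (fun i => xor (a i) (e i)) ≠ 1} := by
  have hshear : #{p : (ι → Bool) × (ι → Bool) |
        boolWeight p.1 ≠ 1 ∧ boolWeight p.2 ≠ 1 ∧
          boolWeight (fun i => xor (p.1 i) (p.2 i)) = 1}
      = #{q : (ι → Bool) × (ι → Bool) | boolWeight q.1 = 1 ∧
          boolWeight q.2 ≠ 1 ∧ boolWeight (fun i => xor (q.2 i) (q.1 i)) ≠ 1} := by
    refine card_nbij' (fun p => (fun i => xor (p.1 i) (p.2 i), p.1))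
      (fun q => (q.2, fun i => xor (q.2 i) (q.1 i))) ?_ ?_ ?_ ?_
    all_goals
      intro p hp
      simp only [coe_filter, Set.mem_ofPred_eq, mem_univ, true_and] at hp ⊢
      simp [hp]
  rw [hshear, card_filter, Fintype.sum_prod_type, sum_filter]
  refine sum_congr rfl fun e _ => ?_
  split_ifs with he
  · simp only [he, true_and, card_filter]
  · simp [he]

lemma card_pairs_boolWeight_ne_one {R : Type*} [CommRing R] :
    (#{p : (ι → Bool) × (ι → Bool) |
        boolWeight p.1 ≠ 1 ∧ boolWeight p.2 ≠ 1 ∧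
          boolWeight (fun i => xor (p.1 i) (p.2 i)) ≠ 1}
      : R) = (2 ^ Fintype.card ι - Fintype.card ι) ^ 2
        - Fintype.card ι * (2 ^ Fintype.card ι - 2 * Fintype.card ι) := by
  have hsplit := card_filter_add_card_filter_not
    (s := {p : (ι → Bool) × (ι → Bool) | boolWeight p.1 ≠ 1 ∧ boolWeight p.2 ≠ 1})
    (fun p => boolWeight (fun i => xor (p.1 i) (p.2 i)) = 1)
  have hprod : #{p : (ι → Bool) × (ι → Bool) | boolWeight p.1 ≠ 1 ∧ boolWeight p.2 ≠ 1}
      = #{a : ι → Bool | boolWeight a ≠ 1} * #{a : ι → Bool | boolWeight a ≠ 1} := by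
    rw [← card_product, ← filter_product, univ_product_univ]
  rw [hprod, filter_filter, filter_filter] at hsplit
  simp only [and_assoc, ← ne_eq, card_pairs_xor_eq_one] at hsplit
  have hsum : ∑ e with boolWeight e = 1,
      (#{a : ι → Bool | boolWeight a ≠ 1 ∧ boolWeight (fun i => xor (a i) (e i)) ≠ 1} : R)
      = Fintype.card ι * (2 ^ Fintype.card ι - 2 * Fintype.card ι) := by
    rw [sum_congr rfl fun e he => ?_, sum_const, card_boolWeight_eq, Nat.choose_one_right,
      nsmul_eq_mul]
    rw [eq_sub_iff_add_eq]
    exact_mod_cast congrArg (Nat.cast : ℕ → R)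
      (card_boolWeight_ne_one_and_xor_ne_one (mem_filter.1 he).2)
  have hA :
      (#{a : ι → Bool | boolWeight a ≠ 1} : R) = 2 ^ Fintype.card ι - Fintype.card ι := by
    rw [eq_sub_iff_add_eq]
    exact_mod_cast congrArg (Nat.cast : ℕ → R) card_boolWeight_ne_one
  rw [← hA, ← hsum, eq_sub_iff_add_eq, sq]
  exact_mod_cast congrArg (Nat.cast : ℕ → R) ((add_comm _ _).trans hsplit)

end BoolVectors

lemma card_filter_fst_equiv {α β γ : Type*} [Fintype α] [Fintype β] [Fintype γ]
    (e : α ≃ β × γ) (P : β → Prop) [DecidablePred P] :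
    #{a | P (e a).1} = #{b | P b} * Fintype.card γ := by
  rw [← card_univ (α := γ), ← card_product, ← filter_product_left]
  exact card_equiv e (by simp)

lemma card_pairs_filter_restrict {ι β : Type*} [Fintype ι] [DecidableEq ι] [Fintype β]
    (s : ι → Prop) [DecidablePred s]
    (P : ({i // s i} → β) × ({i // s i} → β) → Prop) [DecidablePred P] :
    #{p : (ι → β) × (ι → β) | P (fun i => p.1 i, fun i => p.2 i)}
      = #{q | P q} * (Fintype.card β ^ Fintype.card {i // ¬s i}) ^ 2 := by
  let e := ((Equiv.piEquivPiSubtypeProd s fun _ => β).prodCongr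
    (Equiv.piEquivPiSubtypeProd s fun _ => β)).trans (Equiv.prodProdProdComm _ _ _ _)
  refine (card_filter_fst_equiv e P).trans ?_
  simp [sq]

lemma ip_eq_boolWeight_restrict {n : ℕ} (h x : Fin n → Bool) :
    ip h x = boolWeight (fun i : {i // x i = true} => h i) := by
  rw [ip, boolWeight, card_filter,
    ← sum_subtype {i | x i = true} (by simp) fun i => if h i = true then 1 else 0, sum_filter]
  exact sum_congr rfl fun i _ => by cases h i <;> cases x i <;> rfl

def ssPairs {n : ℕ} (x : Fin n → Bool) : Finset ((Fin n → Bool) × (Fin n → Bool)) :=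
  {p | ip p.1 x ≠ 1 ∧ ip p.2 x ≠ 1 ∧ ip (fun j => xor (p.1 j) (p.2 j)) x ≠ 1}

lemma card_ssPairs {R : Type*} [CommRing R] {n : ℕ} (x : Fin n → Bool) :
    (#(ssPairs x) : R)
      = ((2 ^ wt x - wt x) ^ 2 - wt x * (2 ^ wt x - 2 * wt x)) * (2 ^ (n - wt x)) ^ 2 := by
  simp only [ssPairs, ip_eq_boolWeight_restrict]
  have hw : Fintype.card {i // x i = true} = wt x := Fintype.card_subtype _
  refine (congrArg (Nat.cast : ℕ → R) (card_pairs_filter_restrict (fun i => x i = true)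
    fun q => boolWeight q.1 ≠ 1 ∧ boolWeight q.2 ≠ 1 ∧
      boolWeight (fun i => xor (q.1 i) (q.2 i)) ≠ 1)).trans ?_
  rw [Nat.cast_mul, card_pairs_boolWeight_ne_one, Fintype.card_subtype_compl, hw]
  simp

def pairConsecutive {k : ℕ} {β : Type*} : (Fin (2 * k) → β) ≃ (Fin k → β × β) where
  toFun H i := (H ⟨2 * i, by omega⟩, H ⟨2 * i + 1, by omega⟩)
  invFun G j := if j.val % 2 = 0 then (G ⟨j / 2, by omega⟩).1 else (G ⟨j / 2, by omega⟩).2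
  left_inv H := by
    funext j
    dsimp only
    split_ifs <;> congr 1 <;> ext <;> simp <;> omega
  right_inv G := by
    funext i
    have h0 : 2 * i.val / 2 = i := by omega
    have h1 : (2 * i.val + 1) / 2 = i := by omega
    simp [h0, h1]

lemma isSSext2_iff {k n : ℕ} (H : Fin (2 * k) → Fin n → Bool) (x : Fin n → Bool) :
    isSSext2 H x ↔ ∀ i, pairConsecutive H i ∈ ssPairs x := by
  simp only [ssPairs, mem_filter, mem_univ, true_and]
  refine ⟨fun hH i => ⟨hH.1 _, hH.1 _, hH.2 i⟩,
    fun hG => ⟨fun j => ?_, fun i => (hG i).2.2⟩⟩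
  rw [← pairConsecutive.symm_apply_apply H]
  simp only [pairConsecutive, Equiv.coe_fn_mk, Equiv.coe_fn_symm_mk]
  split_ifs
  exacts [(hG ⟨j / 2, by omega⟩).1, (hG ⟨j / 2, by omega⟩).2.1]

lemma card_isSSext2 {k n : ℕ} (x : Fin n → Bool) :
    #{H : Fin (2 * k) → Fin n → Bool | isSSext2 H x} = #(ssPairs x) ^ k := by
  rw [← Fintype.card_piFinset_const]
  exact card_equiv pairConsecutive fun H => by simp [isSSext2_iff, Fintype.mem_piFinset]

lemma sum_SSdistExt2 (k n w : ℕ) :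
    ∑ H, SSdistExt2 k n w H
      = ∑ x with wt x = w, #{H : Fin (2 * k) → Fin n → Bool | isSSext2 H x} := by
  simp only [SSdistExt2, card_filter, sum_filter]
  rw [sum_comm]
  refine sum_congr rfl fun x _ => ?_
  split_ifs with hx <;> simp [hx]

lemma two_mul_sum_range_choose_mul_sub {R : Type*} [CommRing R] (w : ℕ) :
    2 * ∑ γ ∈ range (w + 1), (w.choose γ : R) * (w - γ) = w * 2 ^ w := by
  have hreflect : ∑ γ ∈ range (w + 1), (w.choose γ : R) * (w - γ)
      = ∑ γ ∈ range (w + 1), (w.choose γ : R) * γ := by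
    rw [← sum_range_reflect]
    refine sum_congr rfl fun γ hγ => ?_
    have hγw : γ ≤ w := Nat.lt_succ_iff.1 (mem_range.1 hγ)
    rw [add_tsub_cancel_right, Nat.choose_symm hγw, Nat.cast_sub hγw, sub_sub_cancel]
  calc 2 * ∑ γ ∈ range (w + 1), (w.choose γ : R) * (w - γ)
      = ∑ γ ∈ range (w + 1), (w.choose γ : R) * ((w - γ) + γ) := by
        simp_rw [mul_add, sum_add_distrib, ← hreflect, two_mul]
    _ = w * 2 ^ w := by
        simp_rw [sub_add_cancel, ← sum_mul, ← Nat.cast_sum, Nat.sum_range_choose]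
        push_cast
        ring

lemma two_mul_sum_Icc_choose_mul_sub {R : Type*} [CommRing R] (w : ℕ) :
    2 * ∑ γ ∈ Icc 2 w, (w.choose γ : R) * (w - γ) = w * 2 ^ w - 2 * w ^ 2 := by
  rcases Nat.eq_zero_or_pos w with rfl | hw
  · simp
  have h := two_mul_sum_range_choose_mul_sub (R := R) w
  rw [← sum_range_add_sum_Ico _ (by omega : 2 ≤ w + 1), Ico_add_one_right_eq_Icc] at h
  simp only [sum_range_succ, range_one, sum_singleton, Nat.choose_zero_right, Nat.cast_one,
    Nat.cast_zero, sub_zero, one_mul, Nat.choose_one_right] at h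
  linear_combination h

theorem stmt11_general (k n w : ℕ) :
    (∑ H : Fin (2 * k) → Fin n → Bool, (SSdistExt2 k n w H : ℝ)) / 2 ^ (2 * k * n)
      = (n.choose w : ℝ) / 2 ^ (2 * k * n)
        * ((((2 : ℝ) ^ n - (w : ℝ) * 2 ^ (n - w)) ^ 2
            - 2 ^ (2 * (n - w) + 1)
              * ∑ γ ∈ Finset.Icc 2 w, (w.choose γ : ℝ) * ((w : ℝ) - γ)) ^ k) := by
  have hcount : ∑ H : Fin (2 * k) → Fin n → Bool, (SSdistExt2 k n w H : ℝ)
      = n.choose w * (((2 ^ w - w) ^ 2 - w * (2 ^ w - 2 * w)) * (2 ^ (n - w)) ^ 2) ^ k := by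
    rw [← Nat.cast_sum, sum_SSdistExt2, Nat.cast_sum, sum_congr rfl fun x hx => by
      rw [card_isSSext2, Nat.cast_pow, card_ssPairs, (mem_filter.1 hx).2], sum_const,
      nsmul_eq_mul]
    congr
    exact (card_boolWeight_eq (ι := Fin n) w).trans (by simp)
  rw [hcount, div_mul_eq_mul_div]
  rcases lt_or_ge n w with hnw | hwn
  · simp [Nat.choose_eq_zero_of_lt hnw]
  congr 3
  have hpow : (2 : ℝ) ^ n = 2 ^ (n - w) * 2 ^ w := by rw [← pow_add, Nat.sub_add_cancel hwn]
  have hpow' : (2 : ℝ) ^ (2 * (n - w) + 1) = 2 * (2 ^ (n - w)) ^ 2 := by ring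
  rw [hpow, hpow']
  linear_combination ((2 : ℝ) ^ (n - w)) ^ 2 * two_mul_sum_Icc_choose_mul_sub (R := ℝ) w

theorem stmt11 (k n w : ℕ) (hm1 : 1 ≤ 2 * k) (hmn : 2 * k < n) (hw1 : 1 ≤ w) (hwn : w ≤ n) :
    (∑ H : Fin (2 * k) → Fin n → Bool, (SSdistExt2 k n w H : ℝ)) / 2 ^ (2 * k * n)
      = (n.choose w : ℝ) / 2 ^ (2 * k * n)
        * ((((2 : ℝ) ^ n - (w : ℝ) * 2 ^ (n - w)) ^ 2
            - 2 ^ (2 * (n - w) + 1)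
              * ∑ γ ∈ Finset.Icc 2 w, (w.choose γ : ℝ) * ((w : ℝ) - γ)) ^ k) :=
  stmt11_general k n w
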